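/- arXiv:2409.03640 — 9 statements merged into one kernel-verified Lean document; each statement's English description precedes it below -/
import Mathlib

section
/- Let p : X → Y be a weak p-morphism between finite posets. Then (i) for every x ∈ X, the image of max ↑x under p equals max ↑p(x), and (ii) p maps max X into max Y. -/
/-- The set of maximal elements of the subposet `S`. -/
def maxSet {X : Type*} [PartialOrder X] (S : Set X) : Set X :=
  {x | x ∈ S ∧ ∀ y ∈ S, x ≤ y → y = x}

/-- A weak p-morphism: an order preserving map such that for all `x` and all maximal `y`
above `p x` there is a maximal element `z` of `↑x` with `p z = y`. -/
def IsWeakPMorphism {X Y : Type*} [PartialOrder X] [PartialOrder Y] (p : X → Y) : Prop :=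
  Monotone p ∧
    ∀ x : X, ∀ y ∈ maxSet (Set.univ : Set Y), p x ≤ y →
      ∃ z ∈ maxSet (Set.Ici x), p z = y

/-!
The point is that a weak p-morphism `p` into a finite poset maps maximal elements to maximal
elements: if `z` is maximal, pick a maximal `y ≥ p z` (finiteness); the defining condition at `z`
gives a maximal element of `↑z = {z}` over `y`, so `p z = y`. Part (ii) is exactly this, and in
part (i) it gives `⊆`, while `⊇` is the defining condition of a weak p-morphism.
-/

theorem exists_le_isMax {α : Type*} [Preorder α] [Finite α] (a : α) : ∃ b, a ≤ b ∧ IsMax b := by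
  simpa only [maximal_true] using Finite.exists_le_maximal (p := fun _ : α => True) trivial

section maxSet

variable {X : Type*} [PartialOrder X]

theorem mem_maxSet_univ_iff {x : X} : x ∈ maxSet (Set.univ : Set X) ↔ IsMax x :=
  ⟨fun hx _ hxy => (hx.2 _ trivial hxy).le, fun hx => ⟨trivial, fun _ _ hxy => hx.eq_of_ge hxy⟩⟩

theorem mem_maxSet_Ici_iff {a x : X} : x ∈ maxSet (Set.Ici a) ↔ a ≤ x ∧ IsMax x :=
  ⟨fun hx => ⟨hx.1, fun _ hxy => (hx.2 _ (hx.1.trans hxy) hxy).le⟩,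
    fun hx => ⟨hx.1, fun _ _ hxy => hx.2.eq_of_ge hxy⟩⟩

theorem IsWeakPMorphism.isMax_apply {Y : Type*} [PartialOrder Y] [Finite Y] {p : X → Y}
    (hp : IsWeakPMorphism p) {z : X} (hz : IsMax z) : IsMax (p z) := by
  obtain ⟨y, hzy, hy⟩ := exists_le_isMax (p z)
  obtain ⟨w, hw, rfl⟩ := hp.2 z y (mem_maxSet_univ_iff.2 hy) hzy
  rwa [hz.eq_of_le (mem_maxSet_Ici_iff.1 hw).1]

end maxSet

theorem weakPMorphism_image_maxSet_general
    {X Y : Type*} [PartialOrder X] [PartialOrder Y] [Finite Y]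
    (p : X → Y) (hp : IsWeakPMorphism p) :
    (∀ x : X, p '' maxSet (Set.Ici x) = maxSet (Set.Ici (p x))) ∧
    p '' maxSet (Set.univ : Set X) ⊆ maxSet (Set.univ : Set Y) := by
  refine ⟨fun x => Set.Subset.antisymm ?_ ?_, ?_⟩
  · rintro _ ⟨z, hz, rfl⟩
    rw [mem_maxSet_Ici_iff] at hz ⊢
    exact ⟨hp.1 hz.1, hp.isMax_apply hz.2⟩
  · intro y hy
    obtain ⟨hxy, hy⟩ := mem_maxSet_Ici_iff.1 hy
    exact hp.2 x y (mem_maxSet_univ_iff.2 hy) hxy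
  · rintro _ ⟨x, hx, rfl⟩
    rw [mem_maxSet_univ_iff] at hx ⊢
    exact hp.isMax_apply hx

/-- For a weak p-morphism `p : X → Y` between finite posets: (i) the image of the set of
maximal elements of `↑x` is the set of maximal elements of `↑(p x)`; (ii) `p` maps maximal
elements of `X` to maximal elements of `Y`. -/
theorem weakPMorphism_image_maxSet
    {X Y : Type*} [PartialOrder X] [PartialOrder Y] [Finite X] [Finite Y]
    (p : X → Y) (hp : IsWeakPMorphism p) :
    (∀ x : X, p '' maxSet (Set.Ici x) = maxSet (Set.Ici (p x))) ∧
    p '' maxSet (Set.univ : Set X) ⊆ maxSet (Set.univ : Set Y) :=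
  weakPMorphism_image_maxSet_general p hp
end

section
/- Let X be a poset with least element ⊥, and let (s_{x,Y}) be a family of elements witnessing that X has a free skeleton. Then for every nonempty subset Y of max X, the subposet ↑s_{⊥,Y} (with the induced order) has a free skeleton. -/
/-- `s` is a witnessing family for a free skeleton on a poset with least element `bot`:
`s x Y` is the element `s_{x,Y}` (its value is only constrained when `Y` is a nonempty
subset of `max ↑x`). -/
def IsFreeSkeleton {X : Type*} [PartialOrder X] (bot : X) (s : X → Set X → X) : Prop :=
  (∀ (x : X) (Y : Set X), Y.Nonempty → Y ⊆ maxSet (Set.Ici x) →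
      x ≤ s x Y ∧ Y = maxSet (Set.Ici (s x Y))) ∧
  (∀ (x : X) (Y Z : Set X), Y.Nonempty → Z.Nonempty →
      Y ⊆ maxSet (Set.Ici x) → Z ⊆ maxSet (Set.Ici x) → Y ⊆ Z → s x Z ≤ s x Y) ∧
  (∀ (x : X) (Y : Set X), Y.Nonempty → Y ⊆ maxSet (Set.univ : Set X) →
      maxSet (Set.Ici x) ⊆ Y → s bot Y ≤ x)

/-- A poset has a free skeleton when it has a least element together with a witnessing
family `s_{x,Y}` as in `IsFreeSkeleton`. -/
def HasFreeSkeleton (X : Type*) [PartialOrder X] : Prop :=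
  ∃ (bot : X) (s : X → Set X → X), IsBot bot ∧ IsFreeSkeleton bot s

/-!
On `↑b` take `b` as least element and keep the skeleton of `X`, except that the family at the
new bottom `b` is the family `s_{⊥,·}` of the old bottom: `s'_{z,W} = s_{z,W}` for `z ≠ b` and
`s'_{b,W} = s_{⊥,W}`. Maximal elements of `↑z` are the same in `X` and in `↑b`, so conditions
(i) and (ii) transfer from `X`, and (iii) for `↑b` is (iii) for `X`. The only extra input is
that `s'_{b,W}` lies above `b`; for `b = s_{⊥,Y}` we have `max ↑b = Y`, and this is (ii).
-/

section maxSet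

variable {X : Type*} [PartialOrder X]

lemma maxSet_Ici_subset_maxSet_univ (a : X) : maxSet (Set.Ici a) ⊆ maxSet Set.univ :=
  fun _ ⟨ha, hmax⟩ => ⟨trivial, fun y _ hle => hmax y (ha.trans hle) hle⟩

lemma IsBot.maxSet_Ici_eq {bot : X} (hbot : IsBot bot) :
    maxSet (Set.Ici bot) = maxSet Set.univ :=
  congrArg maxSet (Set.eq_univ_of_forall hbot)

lemma image_val_maxSet_Ici {b : X} (z : Set.Ici b) :
    Subtype.val '' maxSet (Set.Ici z) = maxSet (Set.Ici (z : X)) := by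
  ext w
  constructor
  · rintro ⟨w, ⟨hzw, hmax⟩, rfl⟩
    exact ⟨hzw, fun y hzy hwy => congrArg Subtype.val (hmax ⟨y, z.2.trans hzy⟩ hzy hwy)⟩
  · rintro ⟨hzw, hmax⟩
    exact ⟨⟨w, z.2.trans hzw⟩,
      ⟨hzw, fun y hzy hwy => Subtype.ext (hmax y hzy hwy)⟩, rfl⟩

lemma image_val_maxSet_univ (b : X) :
    Subtype.val '' maxSet (Set.univ : Set (Set.Ici b)) = maxSet (Set.Ici b) := by
  rw [← IsBot.maxSet_Ici_eq (bot := (⟨b, le_rfl⟩ : Set.Ici b)) fun z => z.2,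
    image_val_maxSet_Ici]

lemma image_val_subset_maxSet_Ici_iff {b : X} (z : Set.Ici b) (W : Set (Set.Ici b)) :
    Subtype.val '' W ⊆ maxSet (Set.Ici (z : X)) ↔ W ⊆ maxSet (Set.Ici z) := by
  rw [← image_val_maxSet_Ici, Set.image_subset_image_iff Subtype.val_injective]

end maxSet

open Classical

noncomputable def restrictSkeleton {X : Type*} [PartialOrder X] (bot b : X)
    (s : X → Set X → X) (z : Set.Ici b) (W : Set (Set.Ici b)) : Set.Ici b :=
  if h : b ≤ s (if (z : X) = b then bot else z) (Subtype.val '' W) then ⟨_, h⟩ else z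

namespace IsFreeSkeleton

variable {X : Type*} [PartialOrder X] {bot : X} {s : X → Set X → X}

lemma subset_maxSet_Ici_base (hbot : IsBot bot) {b z : X} {W : Set X}
    (hW : W ⊆ maxSet (Set.Ici z)) : W ⊆ maxSet (Set.Ici (if z = b then bot else z)) := by
  split_ifs
  · exact hW.trans (hbot.maxSet_Ici_eq ▸ maxSet_Ici_subset_maxSet_univ z)
  · exact hW

variable {b : X}

lemma le_skeleton_base (hs : IsFreeSkeleton bot s)
    (hb : ∀ W : Set X, W.Nonempty → W ⊆ maxSet (Set.Ici b) → b ≤ s bot W)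
    {z : X} {W : Set X} (hW : W.Nonempty) (hWz : W ⊆ maxSet (Set.Ici z)) :
    z ≤ s (if z = b then bot else z) W := by
  split_ifs with hz
  · subst hz
    exact hb W hW hWz
  · exact (hs.1 z W hW hWz).1

lemma coe_restrictSkeleton (hs : IsFreeSkeleton bot s)
    (hb : ∀ W : Set X, W.Nonempty → W ⊆ maxSet (Set.Ici b) → b ≤ s bot W)
    {z : Set.Ici b} {W : Set (Set.Ici b)} (hW : W.Nonempty)
    (hWz : Subtype.val '' W ⊆ maxSet (Set.Ici (z : X))) :
    (restrictSkeleton bot b s z W : X) =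
      s (if (z : X) = b then bot else z) (Subtype.val '' W) := by
  rw [restrictSkeleton, dif_pos (z.2.trans (le_skeleton_base hs hb (hW.image _) hWz))]

theorem isFreeSkeleton_restrictSkeleton (hs : IsFreeSkeleton bot s) (hbot : IsBot bot)
    (hb : ∀ W : Set X, W.Nonempty → W ⊆ maxSet (Set.Ici b) → b ≤ s bot W) :
    IsFreeSkeleton (⟨b, le_rfl⟩ : Set.Ici b) (restrictSkeleton bot b s) := by
  refine ⟨fun z W hW hWz => ?_, fun z W Z hW hZ hWz hZz hWZ => ?_,
    fun x W hW hWmax hxW => ?_⟩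
  · rw [← image_val_subset_maxSet_Ici_iff] at hWz
    have hval := coe_restrictSkeleton hs hb hW hWz
    refine ⟨?_, ?_⟩
    · rw [← Subtype.coe_le_coe, hval]
      exact le_skeleton_base hs hb (hW.image _) hWz
    · rw [← Subtype.val_injective.image_injective.eq_iff, image_val_maxSet_Ici, hval]
      exact (hs.1 _ _ (hW.image _) (subset_maxSet_Ici_base hbot hWz)).2
  · rw [← image_val_subset_maxSet_Ici_iff] at hWz hZz
    rw [← Subtype.coe_le_coe, coe_restrictSkeleton hs hb hW hWz,
      coe_restrictSkeleton hs hb hZ hZz]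
    exact hs.2.1 _ _ _ (hW.image _) (hZ.image _) (subset_maxSet_Ici_base hbot hWz)
      (subset_maxSet_Ici_base hbot hZz) (Set.image_mono hWZ)
  · have hWb : Subtype.val '' W ⊆ maxSet (Set.Ici b) :=
      image_val_maxSet_univ b ▸ Set.image_mono hWmax
    rw [← Subtype.coe_le_coe, coe_restrictSkeleton hs hb hW hWb, if_pos rfl]
    refine hs.2.2 x _ (hW.image _) (hWb.trans (maxSet_Ici_subset_maxSet_univ b)) ?_
    rw [← image_val_maxSet_Ici x]
    exact Set.image_mono hxW

end IsFreeSkeleton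

/-- If `X` is a poset with least element `bot` and the family `s` witnesses that `X` has a
free skeleton, then for every nonempty `Y ⊆ max X` the subposet `↑(s bot Y)` (with the
induced order) has a free skeleton. -/
theorem hasFreeSkeleton_Ici_skeleton_element
    {X : Type*} [PartialOrder X] (bot : X) (hbot : IsBot bot)
    (s : X → Set X → X) (hs : IsFreeSkeleton bot s)
    (Y : Set X) (hY : Y.Nonempty) (hYmax : Y ⊆ maxSet (Set.univ : Set X)) :
    HasFreeSkeleton (Set.Ici (s bot Y)) := by
  have hYbot : Y ⊆ maxSet (Set.Ici bot) := hbot.maxSet_Ici_eq ▸ hYmax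
  have hYeq : Y = maxSet (Set.Ici (s bot Y)) := (hs.1 bot Y hY hYbot).2
  refine ⟨_, _, fun z => z.2, hs.isFreeSkeleton_restrictSkeleton hbot fun W hW hWY => ?_⟩
  rw [← hYeq] at hWY
  exact hs.2.1 bot W Y hW hY (hWY.trans hYbot) hYbot hWY
end

section
/- Let A be a finite pseudocomplemented distributive lattice, and let J denote the order dual of the subposet of join-irreducible elements of A. Then J has a free skeleton if and only if A is nontrivial (0 ≠ 1) and the following two conditions hold: (a) there exists a family of join-irreducible elements c_{a,Y}, indexed by the pairs (a, Y) where a is join-irreducible and Y is a nonempty set of atoms of A below a, such that c_{a,Y} ≤ a, the set of atoms of A below c_{a,Y} equals Y, and for nonempty sets of atoms Y ⊆ Z below a one has c_{a,Y} ≤ c_{a,Z}; (b) ¬¬b is join-irreducible for every b ∈ A with b ≠ 0. -/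
/-- An element of a lattice with a least element is join-irreducible if it is nonzero and
`a = b ⊔ c` implies `a = b` or `a = c`. -/
def JoinIrr {A : Type*} [Lattice A] [OrderBot A] (a : A) : Prop :=
  a ≠ ⊥ ∧ ∀ b c : A, a = b ⊔ c → a = b ∨ a = c

/-!
The maximal elements of `J` are the atoms of `A`, and `max ↑x` is the set of atoms below `x`.
As `⊤` is the least element of `J`, a free skeleton on `J` is a family `c` as in (a) such that,
by (iii), `c ⊤ Y` is moreover the largest join-irreducible all of whose atoms lie in `Y`.
In a finite pseudocomplemented lattice, `u ≤ ¬¬b` holds exactly when every atom below `u` lies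
below `b`; so that largest element is `¬¬b` for any `b` with atoms `Y`, which forces (b).
Conversely, under (b), replacing `c ⊤ Y` by `¬¬(c ⊤ Y)` turns a family as in (a) into one
satisfying (iii).
-/

theorem maxSet_Ici_eq_inter {X : Type*} [PartialOrder X] (x : X) :
    maxSet (Set.Ici x) = maxSet Set.univ ∩ Set.Ici x := by
  ext z
  refine ⟨fun ⟨hxz, hmax⟩ =>
      ⟨⟨trivial, fun y _ hzy => hmax y (hxz.trans hzy) hzy⟩, hxz⟩,
    fun ⟨⟨_, hmax⟩, hxz⟩ => ⟨hxz, fun y _ hzy => hmax y trivial hzy⟩⟩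

section Lattice

variable {A : Type*} [Lattice A] [OrderBot A] {a u : A}

theorem joinIrr_iff_supIrred : JoinIrr a ↔ SupIrred a := by
  simp only [JoinIrr, SupIrred, isMin_iff_eq_bot, @eq_comm _ a, ne_comm]

theorem IsAtom.joinIrr (ha : IsAtom a) : JoinIrr a := by
  refine ⟨ha.ne_bot, fun b c habc => ?_⟩
  rcases ha.le_iff.1 (habc ▸ le_sup_left : b ≤ a) with rfl | hb
  · exact Or.inr (by rwa [bot_sup_eq] at habc)
  · exact Or.inl hb.symm

theorem le_of_forall_joinIrr_le [WellFoundedLT A] (h : ∀ p, JoinIrr p → p ≤ a → p ≤ u) :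
    a ≤ u := by
  obtain ⟨s, rfl, hs⟩ := exists_supIrred_decomposition a
  exact Finset.sup_le fun b hb =>
    h b (joinIrr_iff_supIrred.2 (hs hb)) (Finset.le_sup (f := id) hb)

def atomsBelow (a : A) : Set A := {b | IsAtom b ∧ b ≤ a}

theorem atomsBelow_nonempty [IsAtomic A] (ha : a ≠ ⊥) : (atomsBelow a).Nonempty :=
  (eq_bot_or_exists_atom_le a).resolve_left ha

theorem atomsBelow_mono : Monotone (atomsBelow (A := A)) :=
  fun _ _ hab _ ⟨hp, hpa⟩ => ⟨hp, hpa.trans hab⟩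

end Lattice

section Skeleton

variable {A : Type*} [Lattice A] [BoundedOrder A]

/-- Condition (a) of the theorem. -/
def IsAtomRealizer (c : A → Set A → A) : Prop :=
  (∀ (a : A) (Y : Set A), JoinIrr a → Y.Nonempty → Y ⊆ atomsBelow a →
      JoinIrr (c a Y) ∧ c a Y ≤ a ∧ atomsBelow (c a Y) = Y) ∧
  (∀ (a : A) (Y Z : Set A), JoinIrr a → Y.Nonempty → Z.Nonempty →
      Y ⊆ atomsBelow a → Z ⊆ atomsBelow a → Y ⊆ Z → c a Y ≤ c a Z)

/-- A free skeleton on the dual of the join-irreducibles, read off in `A`. -/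
def IsAtomSkeleton (c : A → Set A → A) : Prop :=
  IsAtomRealizer c ∧
    ∀ Y : Set A, Y.Nonempty → Y ⊆ atomsBelow ⊤ →
      ∀ u, JoinIrr u → atomsBelow u ⊆ Y → u ≤ c ⊤ Y

end Skeleton

abbrev JoinIrrDual (A : Type*) [Lattice A] [OrderBot A] : Type _ := {a : A // JoinIrr a}ᵒᵈ

namespace JoinIrrDual

section OrderBot

variable {A : Type*} [Lattice A] [OrderBot A]

def val (x : JoinIrrDual A) : A := (OrderDual.ofDual x).1

def mk (a : A) (ha : JoinIrr a) : JoinIrrDual A := OrderDual.toDual ⟨a, ha⟩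

@[simp] theorem val_mk (a : A) (ha : JoinIrr a) : val (mk a ha) = a := rfl

theorem joinIrr_val (x : JoinIrrDual A) : JoinIrr (val x) := (OrderDual.ofDual x).2

theorem le_iff_val_le {x y : JoinIrrDual A} : x ≤ y ↔ val y ≤ val x := Iff.rfl

theorem val_injective : Function.Injective (val (A := A)) :=
  fun _ _ h => OrderDual.ofDual.injective (Subtype.ext h)

theorem atomsBelow_subset_range_val (a : A) : atomsBelow a ⊆ Set.range val :=
  fun p hp => ⟨mk p hp.1.joinIrr, rfl⟩

theorem preimage_val_nonempty {a : A} {Y : Set A} (hY : Y ⊆ atomsBelow a) (hne : Y.Nonempty) :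
    (val ⁻¹' Y).Nonempty := by
  obtain ⟨p, hp⟩ := hne
  obtain ⟨z, rfl⟩ := atomsBelow_subset_range_val a (hY hp)
  exact ⟨z, hp⟩

variable [IsAtomic A]

theorem mem_maxSet_univ_iff {z : JoinIrrDual A} : z ∈ maxSet Set.univ ↔ IsAtom (val z) := by
  refine ⟨fun ⟨_, hmax⟩ => ⟨(joinIrr_val z).1, fun b hbz => ?_⟩, fun hz => ⟨trivial,
    fun y _ hzy => val_injective ((hz.le_iff.1 hzy).resolve_left (joinIrr_val y).1)⟩⟩
  by_contra hb
  obtain ⟨q, hq, hqb⟩ := atomsBelow_nonempty hb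
  have hqz : mk q hq.joinIrr = z := hmax _ trivial (hqb.trans hbz.le)
  exact (hqb.trans_lt hbz).ne (congrArg val hqz)

theorem maxSet_Ici_eq (x : JoinIrrDual A) : maxSet (Set.Ici x) = val ⁻¹' atomsBelow (val x) := by
  ext z
  rw [maxSet_Ici_eq_inter, Set.mem_inter_iff, mem_maxSet_univ_iff]
  rfl

theorem preimage_val_subset_maxSet_Ici {x : JoinIrrDual A} {Y : Set A}
    (hY : Y ⊆ atomsBelow (val x)) : val ⁻¹' Y ⊆ maxSet (Set.Ici x) :=
  (maxSet_Ici_eq x).symm ▸ Set.preimage_mono hY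

theorem image_val_subset_atomsBelow {x : JoinIrrDual A} {Y : Set (JoinIrrDual A)}
    (hY : Y ⊆ maxSet (Set.Ici x)) : val '' Y ⊆ atomsBelow (val x) :=
  Set.image_subset_iff.2 (maxSet_Ici_eq x ▸ hY)

end OrderBot

section BoundedOrder

variable {A : Type*} [Lattice A] [BoundedOrder A] [WellFoundedLT A]

theorem val_eq_top_of_isBot {bot : JoinIrrDual A} (hbot : IsBot bot) : val bot = ⊤ :=
  top_le_iff.1 <| le_of_forall_joinIrr_le fun p hp _ => le_iff_val_le.1 (hbot (mk p hp))

open Classical in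
noncomputable def descend (s : JoinIrrDual A → Set (JoinIrrDual A) → JoinIrrDual A) :
    A → Set A → A :=
  fun a Y => if ha : JoinIrr a then val (s (mk a ha) (val ⁻¹' Y)) else a

theorem isAtomSkeleton_descend {bot : JoinIrrDual A}
    {s : JoinIrrDual A → Set (JoinIrrDual A) → JoinIrrDual A} (hbot : IsBot bot)
    (hs : IsFreeSkeleton bot s) : IsAtomSkeleton (descend s) := by
  obtain ⟨hs₁, hs₂, hs₃⟩ := hs
  refine ⟨⟨fun a Y ha hne hY => ?_, fun a Y Z ha hYne hZne hY hZ hYZ => ?_⟩,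
    fun Y hne hY u hu huY => ?_⟩
  · obtain ⟨hle, hmax⟩ := hs₁ (mk a ha) _ (preimage_val_nonempty hY hne)
      (preimage_val_subset_maxSet_Ici hY)
    rw [maxSet_Ici_eq, Set.preimage_eq_preimage' ((hY.trans (atomsBelow_subset_range_val a)))
      (atomsBelow_subset_range_val _)] at hmax
    simp only [descend, dif_pos ha]
    exact ⟨joinIrr_val _, hle, hmax.symm⟩
  · simp only [descend, dif_pos ha]
    exact hs₂ (mk a ha) _ _ (preimage_val_nonempty hY hYne) (preimage_val_nonempty hZ hZne)
      (preimage_val_subset_maxSet_Ici hY) (preimage_val_subset_maxSet_Ici hZ)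
      (Set.preimage_mono hYZ)
  · have htop : JoinIrr (⊤ : A) := val_eq_top_of_isBot hbot ▸ joinIrr_val bot
    have hmk : mk ⊤ htop = bot := val_injective (val_eq_top_of_isBot hbot).symm
    simp only [descend, dif_pos htop, hmk]
    refine hs₃ (mk u hu) _ (preimage_val_nonempty hY hne) (fun z hz => ?_) ?_
    · exact mem_maxSet_univ_iff.2 (hY hz).1
    · exact (maxSet_Ici_eq (mk u hu)).symm ▸ Set.preimage_mono huY

open Classical in
noncomputable def lift (c : A → Set A → A) :
    JoinIrrDual A → Set (JoinIrrDual A) → JoinIrrDual A :=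
  fun x Y => if h : JoinIrr (c (val x) (val '' Y)) then mk _ h else x

theorem val_lift {c : A → Set A → A} (hc : IsAtomRealizer c) {x : JoinIrrDual A}
    {Y : Set (JoinIrrDual A)} (hne : Y.Nonempty) (hY : Y ⊆ maxSet (Set.Ici x)) :
    val (lift c x Y) = c (val x) (val '' Y) := by
  rw [lift, dif_pos (hc.1 _ _ (joinIrr_val x) (hne.image val) (image_val_subset_atomsBelow hY)).1,
    val_mk]

theorem isFreeSkeleton_lift {c : A → Set A → A} (hc : IsAtomSkeleton c)
    (htop : JoinIrr (⊤ : A)) : IsFreeSkeleton (mk ⊤ htop) (lift c) := by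
  obtain ⟨hc', hmax⟩ := hc
  refine ⟨fun x Y hne hY => ?_, fun x Y Z hYne hZne hY hZ hYZ => ?_,
    fun x Y hne hY hxY => ?_⟩
  · obtain ⟨-, hle, hatoms⟩ := hc'.1 _ _ (joinIrr_val x) (hne.image val)
      (image_val_subset_atomsBelow hY)
    rw [le_iff_val_le, maxSet_Ici_eq, val_lift hc' hne hY, hatoms,
      Set.preimage_image_eq _ val_injective]
    exact ⟨hle, rfl⟩
  · rw [le_iff_val_le, val_lift hc' hYne hY, val_lift hc' hZne hZ]
    exact hc'.2 _ _ _ (joinIrr_val x) (hYne.image val) (hZne.image val)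
      (image_val_subset_atomsBelow hY) (image_val_subset_atomsBelow hZ) (Set.image_mono hYZ)
  · have hYbot : Y ⊆ maxSet (Set.Ici (mk ⊤ htop)) :=
      (maxSet_Ici_eq (mk ⊤ htop)).symm ▸ fun z hz => ⟨mem_maxSet_univ_iff.1 (hY hz), le_top⟩
    rw [le_iff_val_le, val_lift hc' hne hYbot]
    refine hmax _ (hne.image val) (image_val_subset_atomsBelow hYbot) _ (joinIrr_val x)
      fun p hp => ?_
    exact ⟨mk p hp.1.joinIrr, hxY (preimage_val_subset_maxSet_Ici (subset_refl _) hp), rfl⟩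

theorem hasFreeSkeleton_iff : HasFreeSkeleton (JoinIrrDual A) ↔
    JoinIrr (⊤ : A) ∧ ∃ c : A → Set A → A, IsAtomSkeleton c :=
  ⟨fun ⟨bot, _, hbot, hs⟩ => ⟨val_eq_top_of_isBot hbot ▸ joinIrr_val bot, _,
      isAtomSkeleton_descend hbot hs⟩,
    fun ⟨htop, c, hc⟩ =>
      ⟨mk ⊤ htop, lift c, fun _ => le_top, isFreeSkeleton_lift hc htop⟩⟩

end BoundedOrder

end JoinIrrDual

section Pseudocomplement

variable {A : Type*} [Lattice A] [BoundedOrder A]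

open Classical in
noncomputable def negNegAtTop (neg : A → A) (c : A → Set A → A) : A → Set A → A :=
  fun a Y => if a = ⊤ then neg (neg (c a Y)) else c a Y

variable {neg : A → A} (hneg : ∀ a b : A, a ≤ neg b ↔ a ⊓ b = ⊥)
include hneg

theorem IsAtom.le_neg_iff {p b : A} (hp : IsAtom p) : p ≤ neg b ↔ ¬p ≤ b := by
  rw [hneg, ← disjoint_iff, hp.not_le_iff_disjoint]

variable [IsAtomic A]

theorem le_neg_neg_iff {u b : A} : u ≤ neg (neg b) ↔ atomsBelow u ⊆ atomsBelow b := by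
  refine ⟨fun h p ⟨hp, hpu⟩ => ⟨hp, ?_⟩, fun h => (hneg _ _).2 ?_⟩
  · exact not_not.1 fun hpb => (hp.le_neg_iff hneg).1 (hpu.trans h) ((hp.le_neg_iff hneg).2 hpb)
  · by_contra hne
    obtain ⟨p, hp, hpu⟩ := atomsBelow_nonempty hne
    exact (hp.le_neg_iff hneg).1 (hpu.trans inf_le_right) (h ⟨hp, hpu.trans inf_le_left⟩).2

theorem atomsBelow_neg_neg (b : A) : atomsBelow (neg (neg b)) = atomsBelow b :=
  ((le_neg_neg_iff hneg).1 le_rfl).antisymm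
    (atomsBelow_mono ((le_neg_neg_iff hneg).2 subset_rfl))

theorem joinIrr_top_of_joinIrr_neg_neg (hbt : (⊥ : A) ≠ ⊤)
    (hnn : ∀ b : A, b ≠ ⊥ → JoinIrr (neg (neg b))) : JoinIrr (⊤ : A) :=
  top_le_iff.1 ((le_neg_neg_iff hneg).2 subset_rfl) ▸ hnn ⊤ hbt.symm

theorem isAtomSkeleton_negNegAtTop {c : A → Set A → A} (hc : IsAtomRealizer c)
    (hnn : ∀ b : A, b ≠ ⊥ → JoinIrr (neg (neg b))) (htop : JoinIrr (⊤ : A)) :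
    IsAtomSkeleton (negNegAtTop neg c) := by
  refine ⟨⟨fun a Y ha hne hY => ?_, fun a Y Z ha hYne hZne hY hZ hYZ => ?_⟩,
    fun Y hne hY u _ huY => ?_⟩
  · by_cases h : a = ⊤
    · subst h
      obtain ⟨hji, -, hatoms⟩ := hc.1 ⊤ Y ha hne hY
      simp only [negNegAtTop, if_pos]
      exact ⟨hnn _ hji.1, le_top, by rw [atomsBelow_neg_neg hneg, hatoms]⟩
    · simp only [negNegAtTop, if_neg h]
      exact hc.1 a Y ha hne hY
  · by_cases h : a = ⊤
    · subst h
      simp only [negNegAtTop, if_pos]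
      rw [le_neg_neg_iff hneg, atomsBelow_neg_neg hneg, (hc.1 ⊤ Y ha hYne hY).2.2,
        (hc.1 ⊤ Z ha hZne hZ).2.2]
      exact hYZ
    · simp only [negNegAtTop, if_neg h]
      exact hc.2 a Y Z ha hYne hZne hY hZ hYZ
  · simp only [negNegAtTop, if_pos]
    rwa [le_neg_neg_iff hneg, (hc.1 ⊤ Y htop hne hY).2.2]

theorem IsAtomSkeleton.neg_neg_eq [WellFoundedLT A] {c : A → Set A → A} (hc : IsAtomSkeleton c)
    (htop : JoinIrr (⊤ : A)) {b : A} (hb : b ≠ ⊥) : neg (neg b) = c ⊤ (atomsBelow b) := by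
  have hY := atomsBelow_mono (le_top : b ≤ ⊤)
  obtain ⟨-, -, hatoms⟩ := hc.1.1 ⊤ _ htop (atomsBelow_nonempty hb) hY
  refine le_antisymm (le_of_forall_joinIrr_le fun q hq hqb => ?_)
    ((le_neg_neg_iff hneg).2 hatoms.subset)
  exact hc.2 _ (atomsBelow_nonempty hb) hY q hq ((le_neg_neg_iff hneg).1 hqb)

theorem joinIrr_top_and_exists_isAtomSkeleton_iff [WellFoundedLT A] :
    (JoinIrr (⊤ : A) ∧ ∃ c : A → Set A → A, IsAtomSkeleton c) ↔
      (⊥ : A) ≠ ⊤ ∧ (∃ c : A → Set A → A, IsAtomRealizer c) ∧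
        ∀ b : A, b ≠ ⊥ → JoinIrr (neg (neg b)) := by
  refine ⟨fun ⟨htop, c, hc⟩ => ⟨htop.1.symm, ⟨c, hc.1⟩, fun b hb => ?_⟩,
    fun ⟨hbt, ⟨c, hc⟩, hnn⟩ => ?_⟩
  · rw [hc.neg_neg_eq hneg htop hb]
    exact (hc.1.1 ⊤ _ htop (atomsBelow_nonempty hb) (atomsBelow_mono le_top)).1
  · have htop := joinIrr_top_of_joinIrr_neg_neg hneg hbt hnn
    exact ⟨htop, _, isAtomSkeleton_negNegAtTop hneg hc hnn htop⟩

end Pseudocomplement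

/-- Let `A` be a finite pseudocomplemented distributive lattice and let `J` be the order dual
of the subposet of join-irreducible elements of `A`. Then `J` has a free skeleton iff `A` is
nontrivial and: (a) there is a family `c a Y` of join-irreducibles (for `a` join-irreducible
and `Y` a nonempty set of atoms below `a`) with `c a Y ≤ a`, whose set of atoms below it is
exactly `Y`, monotone in `Y`; and (b) `¬¬b` is join-irreducible for every `b ≠ ⊥`. -/
theorem joinIrr_dual_hasFreeSkeleton_iff
    {A : Type*} [DistribLattice A] [BoundedOrder A] [Fintype A]
    (neg : A → A) (hneg : ∀ a b : A, a ≤ neg b ↔ a ⊓ b = ⊥) :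
    HasFreeSkeleton ({a : A // JoinIrr a}ᵒᵈ) ↔
      ((⊥ : A) ≠ ⊤ ∧
        (∃ c : A → Set A → A,
          (∀ (a : A) (Y : Set A), JoinIrr a → Y.Nonempty →
              Y ⊆ {b : A | IsAtom b ∧ b ≤ a} →
              JoinIrr (c a Y) ∧ c a Y ≤ a ∧ {b : A | IsAtom b ∧ b ≤ c a Y} = Y) ∧
          (∀ (a : A) (Y Z : Set A), JoinIrr a → Y.Nonempty → Z.Nonempty →
              Y ⊆ {b : A | IsAtom b ∧ b ≤ a} → Z ⊆ {b : A | IsAtom b ∧ b ≤ a} →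
              Y ⊆ Z → c a Y ≤ c a Z)) ∧
        (∀ b : A, b ≠ ⊥ → JoinIrr (neg (neg b)))) :=
  JoinIrrDual.hasFreeSkeleton_iff.trans (joinIrr_top_and_exists_isAtomSkeleton_iff hneg)
end

section
/- For all positive integers n ≤ m there exists a surjective weak p-morphism from P(2^m) onto P(2^n). -/
/-- The poset `P(X)`: pairs `⟨x, C⟩` with `C` a nonempty subset of `↑x`, ordered by
`⟨x, C⟩ ≤ ⟨y, D⟩ iff x ≤ y and D ⊆ C`. -/
structure PP (X : Type*) [PartialOrder X] where
  pt : X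
  cl : Set X
  cl_nonempty : cl.Nonempty
  cl_subset : cl ⊆ Set.Ici pt

instance PP.instPartialOrder {X : Type*} [PartialOrder X] : PartialOrder (PP X) where
  le a b := a.pt ≤ b.pt ∧ b.cl ⊆ a.cl
  le_refl a := ⟨le_rfl, subset_rfl⟩
  le_trans a b c hab hbc := ⟨hab.1.trans hbc.1, hbc.2.trans hab.2⟩
  le_antisymm a b hab hba := by
    obtain ⟨pa, ca, h1, h2⟩ := a
    obtain ⟨pb, cb, h3, h4⟩ := b
    obtain ⟨hle, hsub⟩ := hab
    obtain ⟨hge, hsup⟩ := hba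
    have e1 : pa = pb := le_antisymm hle hge
    have e2 : ca = cb := Set.Subset.antisymm hsup hsub
    subst e1; subst e2; rfl

/-!
Any monotone map `π : X → Y` induces a map `⟨x, C⟩ ↦ ⟨π x, π '' C⟩` from `P(X)` to `P(Y)`, and
this is always a weak p-morphism: the maximal elements of `P(Y)` are the points `⟨d, {d}⟩`, and
`⟨π x, π '' C⟩ ≤ ⟨d, {d}⟩` means `d = π c` for some `c ∈ C`, so the point `⟨c, {c}⟩` is a maximal
element above `⟨x, C⟩` over it. If `π` has a monotone section, the induced map is surjective.
For `n ≤ m`, restriction along `Fin n ↪ Fin m` is such a map `2^m → 2^n`, with section the image.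
-/

lemma mem_maxSet_of_isMax {X : Type*} [PartialOrder X] {S : Set X} {x : X}
    (hx : IsMax x) (hxS : x ∈ S) : x ∈ maxSet S :=
  ⟨hxS, fun _ _ hxy => (hx hxy).antisymm hxy⟩

lemma isMax_of_mem_maxSet_univ {X : Type*} [PartialOrder X] {x : X}
    (hx : x ∈ maxSet (Set.univ : Set X)) : IsMax x :=
  fun y hxy => (hx.2 y (Set.mem_univ y) hxy).le

namespace PP

variable {X Y : Type*} [PartialOrder X] [PartialOrder Y]

lemma ext {a b : PP X} (hpt : a.pt = b.pt) (hcl : a.cl = b.cl) : a = b := by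
  cases a; cases b; simp_all

def point (d : X) : PP X :=
  ⟨d, {d}, Set.singleton_nonempty d, by simp⟩

lemma le_point_iff {a : PP X} {d : X} : a ≤ point d ↔ d ∈ a.cl :=
  ⟨fun h => h.2 rfl, fun hd => ⟨a.cl_subset hd, Set.singleton_subset_iff.2 hd⟩⟩

lemma eq_point_of_point_le {c : X} {a : PP X} (h : point c ≤ a) : a = point c := by
  have hcl : a.cl = {c} := Set.eq_singleton_iff_nonempty_unique_mem.2 ⟨a.cl_nonempty, h.2⟩
  have hc : c ∈ a.cl := hcl ▸ rfl
  exact ext (le_antisymm (a.cl_subset hc) h.1) hcl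

lemma isMax_point (c : X) : IsMax (point c) :=
  fun _ h => (eq_point_of_point_le h).le

lemma eq_point_of_isMax {a : PP X} (ha : IsMax a) {d : X} (hd : d ∈ a.cl) : a = point d :=
  (le_point_iff.2 hd).antisymm (ha (le_point_iff.2 hd))

def map (π : X → Y) (hπ : Monotone π) (a : PP X) : PP Y :=
  ⟨π a.pt, π '' a.cl, a.cl_nonempty.image π, by
    rintro _ ⟨c, hc, rfl⟩
    exact hπ (a.cl_subset hc)⟩

variable {π : X → Y} (hπ : Monotone π)

lemma map_monotone : Monotone (map π hπ) :=
  fun _ _ hab => ⟨hπ hab.1, Set.image_mono hab.2⟩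

lemma map_point (c : X) : map π hπ (point c) = point (π c) :=
  ext rfl Set.image_singleton

theorem isWeakPMorphism_map : IsWeakPMorphism (map π hπ) := by
  refine ⟨map_monotone hπ, fun a b hb hab => ?_⟩
  obtain ⟨d, hd⟩ := b.cl_nonempty
  have hb_eq : b = point d := eq_point_of_isMax (isMax_of_mem_maxSet_univ hb) hd
  obtain ⟨c, hc, rfl⟩ : d ∈ π '' a.cl := le_point_iff.1 (hb_eq ▸ hab)
  exact ⟨point c, mem_maxSet_of_isMax (isMax_point c) (le_point_iff.2 hc),
    (map_point hπ c).trans hb_eq.symm⟩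

theorem map_surjective {e : Y → X} (he : Monotone e) (hπe : Function.LeftInverse π e) :
    Function.Surjective (map π hπ) :=
  fun b => ⟨map e he b, ext (hπe b.pt) (hπe.image_image b.cl)⟩

end PP

theorem pp_surjection_of_le_general (n m : ℕ) (hnm : n ≤ m) :
    ∃ p : PP (Set (Fin m)) → PP (Set (Fin n)),
      Function.Surjective p ∧ IsWeakPMorphism p := by
  have hπ : Monotone (Set.preimage (Fin.castLE hnm)) := Set.monotone_preimage
  have hπe : Function.LeftInverse (Set.preimage (Fin.castLE hnm)) (Set.image (Fin.castLE hnm)) :=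
    fun s => Set.preimage_image_eq s (Fin.castLE_injective hnm)
  exact ⟨PP.map _ hπ, PP.map_surjective hπ Set.monotone_image hπe, PP.isWeakPMorphism_map hπ⟩

/-- For all positive integers `n ≤ m` there is a surjective weak p-morphism from `P(2^m)`
onto `P(2^n)`. -/
theorem pp_surjection_of_le (n m : ℕ) (hn : 0 < n) (hnm : n ≤ m) :
    ∃ p : PP (Set (Fin m)) → PP (Set (Fin n)),
      Function.Surjective p ∧ IsWeakPMorphism p :=
  pp_surjection_of_le_general n m hnm
end

section
/- Let X be a finite poset with a least element and a greatest element, and let n = |X| + 1. Then there exists a surjective weak p-morphism from P(2^n) onto X. -/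
/-!
As `X` has a top `t`, its only maximal element is `t`, so a monotone map into `X` is a weak
p-morphism as soon as it sends the maximal elements of its domain to `t` and every element lies
below a maximal one. In `P(2^n)` the maximal elements are the pairs `⟨x, {x}⟩`, and `⟨x, C⟩`
lies below `⟨c, {c}⟩` for any `c ∈ C`. Off the maximal elements any monotone map will do,
e.g. `⟨x, C⟩ ↦ f x` with `f ∅ = b`, `f {k} = y k` and `f s = t` for larger `s`, where
`y : Fin n → X` is onto; `y k` is then attained at the non-maximal `⟨{k}, {univ}⟩`, which
needs `n ≥ 2`.
-/

open Set

lemma mem_maxSet_univ_iff_s12 {P : Type*} [PartialOrder P] {a : P} :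
    a ∈ maxSet (univ : Set P) ↔ IsMax a :=
  ⟨fun h b hab => (h.2 b trivial hab).le, fun h => ⟨trivial, fun _ _ hab => h.eq_of_ge hab⟩⟩

lemma IsMax.mem_maxSet_Ici {P : Type*} [PartialOrder P] {a z : P} (hz : IsMax z) (haz : a ≤ z) :
    z ∈ maxSet (Ici a) :=
  ⟨haz, fun _ _ hzb => hz.eq_of_ge hzb⟩

section MaxToTop

variable {P Y : Type*} [PartialOrder P]

open Classical in
noncomputable def maxToTop (t : Y) (g : P → Y) (a : P) : Y :=
  if IsMax a then t else g a

variable {t : Y} {g : P → Y}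

lemma maxToTop_of_isMax {a : P} (ha : IsMax a) : maxToTop t g a = t := by
  simp [maxToTop, ha]

lemma maxToTop_of_not_isMax {a : P} (ha : ¬IsMax a) : maxToTop t g a = g a := by
  simp [maxToTop, ha]

variable [PartialOrder Y]

lemma monotone_maxToTop (ht : IsTop t) (hg : Monotone g) : Monotone (maxToTop t g) := by
  intro a a' haa'
  by_cases ha' : IsMax a'
  · rw [maxToTop_of_isMax ha']
    exact ht _
  · have ha : ¬IsMax a := fun ha => ha' (ha.eq_of_le haa' ▸ ha)
    rw [maxToTop_of_not_isMax ha, maxToTop_of_not_isMax ha']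
    exact hg haa'

lemma isWeakPMorphism_maxToTop (ht : IsTop t) (hg : Monotone g)
    (hP : ∀ a : P, ∃ z, a ≤ z ∧ IsMax z) : IsWeakPMorphism (maxToTop t g) := by
  refine ⟨monotone_maxToTop ht hg, fun a y hy _ => ?_⟩
  have hyt : y = t := (mem_maxSet_univ_iff_s12.1 hy).eq_of_le (ht y)
  obtain ⟨z, haz, hz⟩ := hP a
  exact ⟨z, hz.mem_maxSet_Ici haz, by rw [maxToTop_of_isMax hz, hyt]⟩

end MaxToTop

namespace PP

variable {X : Type*} [PartialOrder X]

lemma monotone_pt : Monotone (pt : PP X → X) := fun _ _ h => h.1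

lemma isMax_iff {a : PP X} : IsMax a ↔ a.cl = {a.pt} := by
  constructor
  · intro ha
    obtain ⟨c, hc⟩ := a.cl_nonempty
    let z : PP X := ⟨c, {c}, singleton_nonempty c, singleton_subset_iff.2 le_rfl⟩
    obtain ⟨hcpt, hcl⟩ := ha (b := z) ⟨a.cl_subset hc, singleton_subset_iff.2 hc⟩
    have hc_pt : c = a.pt := le_antisymm hcpt (a.cl_subset hc)
    rw [← hc_pt]
    exact a.cl_nonempty.subset_singleton_iff.1 hcl
  · intro ha a' ⟨hpt, hcl⟩
    rw [ha] at hcl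
    have hcl' : a'.cl = {a.pt} := a'.cl_nonempty.subset_singleton_iff.1 hcl
    refine ⟨a'.cl_subset (hcl' ▸ mem_singleton a.pt), ?_⟩
    rw [ha, hcl']

lemma exists_le_isMax (a : PP X) : ∃ z, a ≤ z ∧ IsMax z := by
  obtain ⟨c, hc⟩ := a.cl_nonempty
  exact ⟨⟨c, {c}, singleton_nonempty c, singleton_subset_iff.2 le_rfl⟩,
    ⟨a.cl_subset hc, singleton_subset_iff.2 hc⟩, isMax_iff.2 rfl⟩

end PP

section SingletonExtend

variable {ι X : Type*}

open Classical in
noncomputable def singletonExtend (b t : X) (y : ι → X) (s : Set ι) : X :=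
  if s = ∅ then b else if h : ∃ k, s = {k} then y h.choose else t

variable {b t : X} {y : ι → X}

lemma singletonExtend_singleton (k : ι) : singletonExtend b t y {k} = y k := by
  have h : ∃ k', ({k} : Set ι) = {k'} := ⟨k, rfl⟩
  rw [singletonExtend, if_neg (singleton_ne_empty k), dif_pos h,
    singleton_eq_singleton_iff.1 h.choose_spec.symm]

lemma monotone_singletonExtend [PartialOrder X] (hb : IsBot b) (ht : IsTop t) :
    Monotone (singletonExtend b t y) := by
  intro s s' hss'
  by_cases hs : s = ∅
  · rw [singletonExtend, if_pos hs]
    exact hb _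
  by_cases hs' : ∃ k, s' = {k}
  · obtain ⟨k, rfl⟩ := hs'
    rw [(nonempty_iff_ne_empty.2 hs).subset_singleton_iff.1 hss']
  · have hs'_ne : s' ≠ ∅ := ((nonempty_iff_ne_empty.2 hs).mono hss').ne_empty
    rw [singletonExtend, singletonExtend, if_neg hs'_ne, dif_neg hs']
    exact ht _

end SingletonExtend

/-- If `X` is a finite poset with a least and a greatest element and `n = |X| + 1`, then
there is a surjective weak p-morphism from `P(2^n)` onto `X`. -/
theorem pp_surjection_onto_bounded_poset
    {X : Type*} [PartialOrder X] [Fintype X]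
    (b t : X) (hb : IsBot b) (ht : IsTop t) :
    ∃ p : PP (Set (Fin (Fintype.card X + 1))) → X,
      Function.Surjective p ∧ IsWeakPMorphism p := by
  have : Nontrivial (Fin (Fintype.card X + 1)) :=
    Fin.nontrivial_iff_two_le.2 (Nat.succ_le_succ (Fintype.card_pos_iff.2 ⟨b⟩))
  let y : Fin (Fintype.card X + 1) → X := Fin.cons b (Fintype.equivFin X).symm
  have hy : Function.Surjective y := fun v =>
    ⟨(Fintype.equivFin X v).succ, by simp [y]⟩
  let g : PP (Set (Fin (Fintype.card X + 1))) → X := fun a => singletonExtend b t y a.pt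
  have hg : Monotone g := (monotone_singletonExtend hb ht).comp PP.monotone_pt
  refine ⟨maxToTop t g, fun v => ?_, isWeakPMorphism_maxToTop ht hg PP.exists_le_isMax⟩
  obtain ⟨k, rfl⟩ := hy v
  let a : PP (Set (Fin (Fintype.card X + 1))) :=
    ⟨{k}, {univ}, singleton_nonempty univ, singleton_subset_iff.2 (subset_univ _)⟩
  have ha : ¬IsMax a := fun h =>
    singleton_ne_univ k (singleton_eq_singleton_iff.1 (PP.isMax_iff.1 h)).symm
  exact ⟨a, by rw [maxToTop_of_not_isMax ha]; exact singletonExtend_singleton k⟩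
end

section
/- Let X be a finite poset. Then there exist a positive integer n and a surjective weak p-morphism from P(2^n) onto X if and only if X has a free skeleton. -/
/-!
If `p : P(2^n) → X` is a surjective weak p-morphism, the maximal elements above `p ⟨u, C⟩`
are exactly the labels `p ⟨c, {c}⟩` of the points `c ∈ C`. Fixing a preimage `⟨u_x, C_x⟩` of
every `x` (the bottom `⟨∅, 2^n⟩` for the least element), the image of the restriction
`⟨u_x, {c ∈ C_x | p ⟨c, {c}⟩ ∈ Y}⟩` is a free skeleton.

Conversely, given a free skeleton, take coordinates `X ⊕ X`, label the point `{inl x, inr y}`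
by `y` when `y` is maximal, and send `⟨{inl x}, {{inl x, inr y} | y ∈ max ↑x}⟩` to `x`.
Maximal elements `⟨c, {c}⟩` go to the label of `c`, and any other `⟨u, C⟩` goes to
`s_{x, label C}`, where `x` is the unique element whose designated preimage lies below
`⟨u, C⟩` (unique because these preimages have disjoint covers), or `⊥` if there is none. In all cases the maximal elements above the image of `⟨u, C⟩` are
the labels of `C`, which gives the back condition at once and reduces monotonicity to the
three axioms of a free skeleton.
-/

open Function Set

section MaxSet

variable {P : Type*} [PartialOrder P]

lemma mem_maxSet_Ici_iff_s13 {x y : P} : y ∈ maxSet (Ici x) ↔ x ≤ y ∧ y ∈ maxSet univ :=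
  ⟨fun ⟨hxy, h⟩ => ⟨hxy, trivial, fun z _ hyz => h z (hxy.trans hyz) hyz⟩,
    fun ⟨hxy, _, h⟩ => ⟨hxy, fun z _ hyz => h z trivial hyz⟩⟩

lemma maxSet_Ici_of_isBot {b : P} (hb : IsBot b) : maxSet (Ici b) = maxSet univ := by
  ext y
  simp [mem_maxSet_Ici_iff_s13, hb y]

lemma maxSet_Ici_of_mem_maxSet {y : P} (hy : y ∈ maxSet univ) : maxSet (Ici y) = {y} := by
  ext z
  rw [mem_maxSet_Ici_iff_s13, mem_singleton_iff]
  refine ⟨fun ⟨hyz, _⟩ => hy.2 z trivial hyz, ?_⟩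
  rintro rfl
  exact ⟨le_rfl, hy⟩

lemma maxSet_Ici_nonempty [Finite P] (x : P) : (maxSet (Ici x)).Nonempty := by
  obtain ⟨a, ha, hm⟩ := (toFinite (Ici x)).exists_maximalFor id _ ⟨x, le_rfl⟩
  exact ⟨a, ha, fun y hy hay => le_antisymm (hm hy hay) hay⟩

end MaxSet

namespace IsWeakPMorphism

variable {P X : Type*} [PartialOrder P] [PartialOrder X] [Finite X] {p : P → X}

lemma map_mem_maxSet (hp : IsWeakPMorphism p) {a : P} (ha : a ∈ maxSet univ) :
    p a ∈ maxSet univ := by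
  obtain ⟨y, hy⟩ := maxSet_Ici_nonempty (p a)
  obtain ⟨hay, hymax⟩ := mem_maxSet_Ici_iff_s13.mp hy
  obtain ⟨z, hz, rfl⟩ := hp.2 a y hymax hay
  rw [maxSet_Ici_of_mem_maxSet ha] at hz
  rwa [← hz]

lemma maxSet_Ici_map (hp : IsWeakPMorphism p) (a : P) :
    maxSet (Ici (p a)) = p '' maxSet (Ici a) := by
  ext y
  constructor
  · intro hy
    obtain ⟨hay, hymax⟩ := mem_maxSet_Ici_iff_s13.mp hy
    exact hp.2 a y hymax hay
  · rintro ⟨z, hz, rfl⟩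
    obtain ⟨haz, hzmax⟩ := mem_maxSet_Ici_iff_s13.mp hz
    exact mem_maxSet_Ici_iff_s13.mpr ⟨hp.1 haz, hp.map_mem_maxSet hzmax⟩

end IsWeakPMorphism

namespace PP

variable {Z : Type*} [PartialOrder Z]

def sing (c : Z) : PP Z :=
  ⟨c, {c}, singleton_nonempty c, singleton_subset_iff.mpr le_rfl⟩

lemma le_sing {a : PP Z} {c : Z} (hc : c ∈ a.cl) : a ≤ sing c :=
  ⟨a.cl_subset hc, singleton_subset_iff.mpr hc⟩

lemma sing_mem_maxSet (c : Z) : sing c ∈ maxSet univ := by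
  refine ⟨trivial, fun a _ hca => ?_⟩
  obtain ⟨d, hd⟩ := a.cl_nonempty
  obtain rfl : d = c := hca.2 hd
  exact le_antisymm (le_sing hd) hca

lemma maxSet_Ici_eq_image_sing (a : PP Z) : maxSet (Ici a) = sing '' a.cl := by
  ext b
  rw [mem_maxSet_Ici_iff_s13]
  constructor
  · rintro ⟨hab, hb⟩
    obtain ⟨d, hd⟩ := b.cl_nonempty
    exact ⟨d, hab.2 hd, hb.2 _ trivial (le_sing hd)⟩
  · rintro ⟨c, hc, rfl⟩
    exact ⟨le_sing hc, sing_mem_maxSet c⟩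

lemma exists_eq_sing_of_mem_maxSet {a : PP Z} (ha : a ∈ maxSet univ) :
    ∃ c ∈ a.cl, a = sing c := by
  have h : a ∈ maxSet (Ici a) := mem_maxSet_Ici_iff_s13.mpr ⟨le_rfl, ha⟩
  rw [maxSet_Ici_eq_image_sing] at h
  obtain ⟨c, hc, hca⟩ := h
  exact ⟨c, hc, hca.symm⟩

instance [OrderBot Z] : OrderBot (PP Z) where
  bot := ⟨⊥, univ, univ_nonempty, fun _ _ => bot_le⟩
  bot_le _ := ⟨bot_le, subset_univ _⟩

open Classical in
/-- Junk value `a` when `a.cl ∩ D` is empty. -/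
noncomputable def restrict (a : PP Z) (D : Set Z) : PP Z :=
  if h : (a.cl ∩ D).Nonempty then
    ⟨a.pt, a.cl ∩ D, h, inter_subset_left.trans a.cl_subset⟩
  else a

variable {a b : PP Z} {C D : Set Z}

lemma restrict_pt : (a.restrict D).pt = a.pt := by
  unfold restrict
  split_ifs <;> rfl

lemma restrict_cl (h : (a.cl ∩ D).Nonempty) : (a.restrict D).cl = a.cl ∩ D := by
  rw [restrict, dif_pos h]

lemma le_restrict : a ≤ a.restrict D := by
  unfold restrict
  split_ifs
  exacts [⟨le_rfl, inter_subset_left⟩, le_rfl]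

lemma restrict_anti (hC : (a.cl ∩ C).Nonempty) (hCD : C ⊆ D) : a.restrict D ≤ a.restrict C := by
  have hsub : a.cl ∩ C ⊆ a.cl ∩ D := inter_subset_inter_right _ hCD
  refine ⟨restrict_pt.trans_le restrict_pt.ge, ?_⟩
  rw [restrict_cl hC, restrict_cl (hC.mono hsub)]
  exact hsub

lemma restrict_le (hpt : a.pt ≤ b.pt) (hcl : b.cl ⊆ a.cl ∩ D) : a.restrict D ≤ b :=
  ⟨restrict_pt.trans_le hpt, by rw [restrict_cl (b.cl_nonempty.mono hcl)]; exact hcl⟩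

end PP

theorem IsWeakPMorphism.hasFreeSkeleton {Z X : Type*} [PartialOrder Z] [OrderBot Z]
    [PartialOrder X] [Finite X] {p : PP Z → X} (hp : IsWeakPMorphism p)
    (hsurj : Surjective p) : HasFreeSkeleton X := by
  classical
  set label : Z → X := p ∘ PP.sing
  have hmax (a : PP Z) : maxSet (Ici (p a)) = label '' a.cl := by
    rw [hp.maxSet_Ici_map, PP.maxSet_Ici_eq_image_sing, image_image]
    rfl
  set q : X → PP Z := update (surjInv hsurj) (p ⊥) ⊥
  have hpq (x : X) : p (q x) = x := by
    by_cases hx : x = p ⊥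
    · subst hx
      simp [q]
    · simp [q, hx, surjInv_eq]
  have hne (x : X) (Y : Set X) (hY : Y.Nonempty) (hYx : Y ⊆ maxSet (Ici x)) :
      ((q x).cl ∩ label ⁻¹' Y).Nonempty := by
    obtain ⟨y, hy⟩ := hY
    rw [← hpq x, hmax] at hYx
    obtain ⟨c, hc, rfl⟩ := hYx hy
    exact ⟨c, hc, hy⟩
  have hq_bot : q (p ⊥) = ⊥ := update_self _ _ _
  refine ⟨p ⊥, fun x Y => p ((q x).restrict (label ⁻¹' Y)), ?_, ?_, ?_, ?_⟩
  · intro x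
    obtain ⟨a, rfl⟩ := hsurj x
    exact hp.1 bot_le
  · intro x Y hY hYx
    refine ⟨(hpq x).symm.trans_le (hp.1 PP.le_restrict), ?_⟩
    rw [hmax, PP.restrict_cl (hne x Y hY hYx), image_inter_preimage, ← hmax, hpq,
      inter_eq_right.mpr hYx]
  · intro x Y Y' hY _ hYx _ hYY'
    exact hp.1 (PP.restrict_anti (hne x Y hY hYx) (preimage_mono hYY'))
  · intro x Y _ _ hxY
    have hcl : (q x).cl ⊆ label ⁻¹' Y := image_subset_iff.mp (by rwa [← hmax, hpq])
    beta_reduce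
    rw [hq_bot, ← hpq x]
    exact hp.1 (PP.restrict_le bot_le (subset_inter (subset_univ _) hcl))

namespace FreeSkeleton

variable {X α : Type*} (e : X ⊕ X ↪ α)

def pair (x y : X) : Set α := {e (.inl x), e (.inr y)}

lemma eq_of_pair_eq {x x' y y' : X} (h : pair e x y = pair e x' y') : x = x' := by
  have hx : e (.inl x) ∈ pair e x' y' := h ▸ mem_insert _ _
  simpa [pair] using hx

variable [PartialOrder X] [Finite X] (bot : X)

def point (x : X) : PP (Set α) where
  pt := {e (.inl x)}
  cl := pair e x '' maxSet (Ici x)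
  cl_nonempty := (maxSet_Ici_nonempty x).image _
  cl_subset := by
    rintro _ ⟨y, -, rfl⟩
    exact singleton_subset_iff.mpr (mem_insert _ _)

lemma eq_of_point_le {x z : X} (h : point e x ≤ point e z) : x = z := by
  have hx : e (.inl x) ∈ ({e (.inl z)} : Set α) := h.1 rfl
  simpa using hx

lemma point_not_mem_maxSet (x : X) : point e x ∉ maxSet univ := by
  intro h
  obtain ⟨c, ⟨y, -, rfl⟩, hxc⟩ := PP.exists_eq_sing_of_mem_maxSet h
  have hpt : ({e (.inl x)} : Set α) = pair e x y := congrArg PP.pt hxc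
  have hy : e (.inr y) ∈ ({e (.inl x)} : Set α) := hpt ▸ mem_insert_of_mem _ rfl
  simp at hy

open Classical in
noncomputable def label (c : Set α) : X :=
  if h : ∃ y ∈ maxSet univ, e (.inr y) ∈ c then h.choose else (maxSet_Ici_nonempty bot).choose

lemma label_mem_maxSet (c : Set α) : label e bot c ∈ maxSet univ := by
  unfold label
  split_ifs with h
  · exact h.choose_spec.1
  · exact (mem_maxSet_Ici_iff_s13.mp (maxSet_Ici_nonempty bot).choose_spec).2

lemma label_pair (x : X) {y : X} (hy : y ∈ maxSet univ) : label e bot (pair e x y) = y := by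
  have h : ∃ y' ∈ maxSet univ, e (.inr y') ∈ pair e x y := ⟨y, hy, mem_insert_of_mem _ rfl⟩
  rw [label, dif_pos h]
  simpa [pair] using h.choose_spec.2

lemma image_label_point (x : X) : label e bot '' (point e x).cl = maxSet (Ici x) := by
  change label e bot '' (pair e x '' _) = _
  rw [image_image, image_congr fun y hy => label_pair e bot x (mem_maxSet_Ici_iff_s13.mp hy).2,
    image_id']

lemma image_label_subset_maxSet_univ (q : PP (Set α)) : label e bot '' q.cl ⊆ maxSet univ := by
  rintro _ ⟨c, -, rfl⟩
  exact label_mem_maxSet e bot c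

lemma image_label_subset_of_point_le {x : X} {q : PP (Set α)} (h : point e x ≤ q) :
    label e bot '' q.cl ⊆ maxSet (Ici x) :=
  image_label_point e bot x ▸ image_mono h.2

open Classical in
noncomputable def anchor (q : PP (Set α)) : X :=
  if h : ∃ x, point e x ≤ q then h.choose else bot

lemma anchor_eq {x : X} {q : PP (Set α)} (h : point e x ≤ q) : anchor e bot q = x := by
  have hex : ∃ x, point e x ≤ q := ⟨x, h⟩
  rw [anchor, dif_pos hex]
  obtain ⟨c, hc⟩ := q.cl_nonempty
  obtain ⟨y, -, hy⟩ := hex.choose_spec.2 hc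
  obtain ⟨y', -, hy'⟩ := h.2 hc
  exact eq_of_pair_eq e (hy.trans hy'.symm)

lemma anchor_eq_bot {q : PP (Set α)} (h : ¬ ∃ x, point e x ≤ q) : anchor e bot q = bot :=
  dif_neg h

lemma image_label_subset_maxSet_anchor (hbot : IsBot bot) (q : PP (Set α)) :
    label e bot '' q.cl ⊆ maxSet (Ici (anchor e bot q)) := by
  by_cases h : ∃ x, point e x ≤ q
  · obtain ⟨x, hx⟩ := h
    rw [anchor_eq e bot hx]
    exact image_label_subset_of_point_le e bot hx
  · rw [anchor_eq_bot e bot h, maxSet_Ici_of_isBot hbot]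
    exact image_label_subset_maxSet_univ e bot q

variable (s : X → Set X → X)

open Classical in
noncomputable def proj (q : PP (Set α)) : X :=
  if q ∈ maxSet univ then label e bot q.pt
  else if h : ∃ x, q = point e x then h.choose
  else s (anchor e bot q) (label e bot '' q.cl)

lemma proj_sing (c : Set α) : proj e bot s (PP.sing c) = label e bot c := by
  rw [proj, if_pos (PP.sing_mem_maxSet c)]
  rfl

lemma proj_point (x : X) : proj e bot s (point e x) = x := by
  have h : ∃ z, point e x = point e z := ⟨x, rfl⟩
  rw [proj, if_neg (point_not_mem_maxSet e x), dif_pos h]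
  exact (eq_of_point_le e h.choose_spec.le).symm

lemma proj_of_not_mem_maxSet {q : PP (Set α)} (h₁ : q ∉ maxSet univ)
    (h₂ : ¬ ∃ x, q = point e x) :
    proj e bot s q = s (anchor e bot q) (label e bot '' q.cl) := by
  rw [proj, if_neg h₁, dif_neg h₂]

variable {bot s}

lemma maxSet_Ici_proj (hbot : IsBot bot) (hs : IsFreeSkeleton bot s) (q : PP (Set α)) :
    maxSet (Ici (proj e bot s q)) = label e bot '' q.cl := by
  by_cases h₁ : q ∈ maxSet univ
  · obtain ⟨c, -, rfl⟩ := PP.exists_eq_sing_of_mem_maxSet h₁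
    rw [proj_sing, maxSet_Ici_of_mem_maxSet (label_mem_maxSet e bot c)]
    exact (image_singleton).symm
  by_cases h₂ : ∃ x, q = point e x
  · obtain ⟨x, rfl⟩ := h₂
    rw [proj_point, image_label_point]
  rw [proj_of_not_mem_maxSet e bot s h₁ h₂]
  exact (hs.1 _ _ (q.cl_nonempty.image _) (image_label_subset_maxSet_anchor e bot hbot q)).2.symm

lemma proj_le_label (hbot : IsBot bot) (hs : IsFreeSkeleton bot s) {q : PP (Set α)} {c : Set α} (hc : c ∈ q.cl) :
    proj e bot s q ≤ label e bot c := by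
  have h : label e bot c ∈ maxSet (Ici (proj e bot s q)) := by
    rw [maxSet_Ici_proj e hbot hs]
    exact mem_image_of_mem _ hc
  exact h.1

lemma monotone_proj (hbot : IsBot bot) (hs : IsFreeSkeleton bot s) : Monotone (proj e bot s) := by
  intro q q' hle
  by_cases h₁' : q' ∈ maxSet univ
  · obtain ⟨c, hc, rfl⟩ := PP.exists_eq_sing_of_mem_maxSet h₁'
    rw [proj_sing]
    exact proj_le_label e hbot hs (hle.2 hc)
  have h₁ : q ∉ maxSet univ := fun h => h₁' (h.2 q' trivial hle ▸ h)
  have hne (r : PP (Set α)) : (label e bot '' r.cl).Nonempty := r.cl_nonempty.image _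
  by_cases h₂ : ∃ x, q = point e x
  · obtain ⟨x, rfl⟩ := h₂
    rw [proj_point]
    by_cases h₂' : ∃ z, q' = point e z
    · obtain ⟨z, rfl⟩ := h₂'
      rw [proj_point, eq_of_point_le e hle]
    · rw [proj_of_not_mem_maxSet e bot s h₁' h₂', anchor_eq e bot hle]
      exact (hs.1 x _ (hne q') (image_label_subset_of_point_le e bot hle)).1
  rw [proj_of_not_mem_maxSet e bot s h₁ h₂]
  by_cases h₃ : ∃ x, point e x ≤ q
  · obtain ⟨x, hx⟩ := h₃
    have h₂' : ¬ ∃ z, q' = point e z := by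
      rintro ⟨z, rfl⟩
      obtain rfl := eq_of_point_le e (hx.trans hle)
      exact h₂ ⟨x, le_antisymm hle hx⟩
    rw [proj_of_not_mem_maxSet e bot s h₁' h₂', anchor_eq e bot hx, anchor_eq e bot (hx.trans hle)]
    exact hs.2.1 x _ _ (hne q') (hne q) (image_label_subset_of_point_le e bot (hx.trans hle))
      (image_label_subset_of_point_le e bot hx) (image_mono hle.2)
  · rw [anchor_eq_bot e bot h₃]
    refine hs.2.2 _ _ (hne q) (image_label_subset_maxSet_univ e bot q) ?_
    rw [maxSet_Ici_proj e hbot hs q']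
    exact image_mono hle.2

lemma isWeakPMorphism_proj (hbot : IsBot bot) (hs : IsFreeSkeleton bot s) : IsWeakPMorphism (proj e bot s) := by
  refine ⟨monotone_proj e hbot hs, fun q y hy hqy => ?_⟩
  have h : y ∈ label e bot '' q.cl := by
    rw [← maxSet_Ici_proj e hbot hs]
    exact mem_maxSet_Ici_iff_s13.mpr ⟨hqy, hy⟩
  obtain ⟨c, hc, rfl⟩ := h
  exact ⟨PP.sing c, PP.maxSet_Ici_eq_image_sing q ▸ mem_image_of_mem _ hc, proj_sing e bot s c⟩

end FreeSkeleton

theorem HasFreeSkeleton.exists_weakPMorphism {X α : Type*} [PartialOrder X] [Finite X]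
    (h : HasFreeSkeleton X) (e : X ⊕ X ↪ α) :
    ∃ p : PP (Set α) → X, Surjective p ∧ IsWeakPMorphism p := by
  obtain ⟨bot, s, hbot, hs⟩ := h
  exact ⟨FreeSkeleton.proj e bot s, fun x => ⟨_, FreeSkeleton.proj_point e bot s x⟩,
    FreeSkeleton.isWeakPMorphism_proj e hbot hs⟩

/-- A finite poset `X` is a surjective weak p-morphic image of `P(2^n)` for some positive
integer `n` if and only if `X` has a free skeleton. -/
theorem weakPMorphic_image_of_pp_iff_hasFreeSkeleton
    {X : Type*} [PartialOrder X] [Finite X] :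
    (∃ n : ℕ, 0 < n ∧ ∃ p : PP (Set (Fin n)) → X,
        Function.Surjective p ∧ IsWeakPMorphism p) ↔
      HasFreeSkeleton X := by
  refine ⟨fun ⟨_, _, _, hsurj, hp⟩ => hp.hasFreeSkeleton hsurj, fun h => ?_⟩
  have : Nonempty X := h.elim fun bot _ => ⟨bot⟩
  exact ⟨Nat.card (X ⊕ X), Nat.card_pos,
    h.exists_weakPMorphism (Finite.equivFin (X ⊕ X)).toEmbedding⟩
end

section
/- Let A and B be finite pseudocomplemented distributive lattices and let h : A → B be a surjective homomorphism. Then for every b ∈ B: b is an atom of B if and only if b ≠ 0 and there exists an atom a of A with h(a) = b. -/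
/-!
Images of atoms are atoms whenever they are nonzero, since `h` maps the interval `[0, a]` onto
`[0, h a]`. Conversely, if `b` is an atom, take a minimal preimage `x` of `b` and an atom `a ≤ x`.
If `h a = 0`, then `h (x ∧ ¬a) = b ∧ ¬0 = b`, so minimality forces `x ≤ ¬a`, whence
`a = a ∧ x = 0`; hence `0 < h a ≤ b` and `h a = b`.
-/

section Pseudocomplement

variable {α : Type*} [SemilatticeInf α] [BoundedOrder α]

theorem pseudocompl_bot_eq_top (neg : α → α) (hneg : ∀ x y : α, x ≤ neg y ↔ x ⊓ y = ⊥) :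
    neg ⊥ = ⊤ :=
  top_le_iff.mp ((hneg ⊤ ⊥).mpr (inf_bot_eq ⊤))

end Pseudocomplement

section InfMap

variable {A B : Type*} [SemilatticeInf A] [SemilatticeInf B] {h : A → B}

theorem monotone_of_map_inf (hinf : ∀ x y, h (x ⊓ y) = h x ⊓ h y) : Monotone h := by
  intro x y hxy
  rw [← inf_eq_left.mpr hxy, hinf]
  exact inf_le_right

theorem isAtom_map_of_isAtom [OrderBot A] [OrderBot B] (hsurj : Function.Surjective h)
    (hinf : ∀ x y, h (x ⊓ y) = h x ⊓ h y) (hbot : h ⊥ = ⊥) {a : A} (ha : IsAtom a)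
    (hne : h a ≠ ⊥) : IsAtom (h a) := by
  refine ⟨hne, fun c hc => ?_⟩
  obtain ⟨x, rfl⟩ := hsurj c
  have hmap : h (a ⊓ x) = h x := by rw [hinf, inf_eq_right.mpr hc.le]
  rcases ha.le_iff.mp (inf_le_left : a ⊓ x ≤ a) with hax_bot | hax_eq
  · rw [← hmap, hax_bot, hbot]
  · exact absurd (by rw [← hmap, hax_eq]) hc.ne'

theorem map_ne_bot_of_minimal_fiber [OrderBot A] [BoundedOrder B]
    (negA : A → A) (hA : ∀ x y : A, x ≤ negA y ↔ x ⊓ y = ⊥)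
    (negB : B → B) (hB : ∀ x y : B, x ≤ negB y ↔ x ⊓ y = ⊥)
    (hinf : ∀ x y, h (x ⊓ y) = h x ⊓ h y) (hnegh : ∀ x, h (negA x) = negB (h x))
    {b : B} {x : A} (hx : Minimal (fun y => h y = b) x) {a : A} (hax : a ≤ x) (ha : a ≠ ⊥) :
    h a ≠ ⊥ := by
  intro hbot
  have hfiber : h (x ⊓ negA a) = b := by
    rw [hinf, hnegh, hbot, pseudocompl_bot_eq_top negB hB, inf_top_eq, hx.prop]
  have hx_le : x ≤ negA a := (hx.eq_of_le hfiber inf_le_left).ge.trans inf_le_right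
  exact ha (by rw [← inf_eq_right.mpr hax]; exact (hA x a).mp hx_le)

end InfMap

theorem atom_iff_image_of_atom_general
    {A B : Type*} [DistribLattice A] [BoundedOrder A] [Finite A]
    [DistribLattice B] [BoundedOrder B]
    (negA : A → A) (hA : ∀ x y : A, x ≤ negA y ↔ x ⊓ y = ⊥)
    (negB : B → B) (hB : ∀ x y : B, x ≤ negB y ↔ x ⊓ y = ⊥)
    (h : A → B) (hsurj : Function.Surjective h)
    (hinf : ∀ x y, h (x ⊓ y) = h x ⊓ h y)
    (hnegh : ∀ x, h (negA x) = negB (h x)) (hbot : h ⊥ = ⊥)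
    (b : B) :
    IsAtom b ↔ b ≠ ⊥ ∧ ∃ a : A, IsAtom a ∧ h a = b := by
  constructor
  · intro hb
    refine ⟨hb.1, ?_⟩
    obtain ⟨x, hx⟩ := exists_minimal_of_wellFoundedLT (fun y => h y = b) (hsurj b)
    have hx_ne : x ≠ ⊥ := fun hx_bot => hb.1 (by rw [← hx.prop, hx_bot, hbot])
    obtain ⟨a, ha, hax⟩ := (eq_bot_or_exists_atom_le x).resolve_left hx_ne
    have hab : h a ≤ b := hx.prop ▸ monotone_of_map_inf hinf hax
    have ha_ne : h a ≠ ⊥ := map_ne_bot_of_minimal_fiber negA hA negB hB hinf hnegh hx hax ha.1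
    exact ⟨a, ha, (hb.le_iff.mp hab).resolve_left ha_ne⟩
  · rintro ⟨hne, a, ha, rfl⟩
    exact isAtom_map_of_isAtom hsurj hinf hbot ha hne

/-- Let `A` and `B` be finite pseudocomplemented distributive lattices (bounded distributive
lattices with operations `negA`, `negB` satisfying `x ≤ ¬y ↔ x ⊓ y = ⊥`) and let `h : A → B`
be a surjective homomorphism (preserving `⊓`, `⊔`, `¬`, `⊥`, `⊤`). Then `b ∈ B` is an atom
iff `b ≠ ⊥` and `b = h a` for some atom `a` of `A`. -/
theorem atom_iff_image_of_atom
    {A B : Type*} [DistribLattice A] [BoundedOrder A] [Finite A]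
    [DistribLattice B] [BoundedOrder B] [Finite B]
    (negA : A → A) (hA : ∀ x y : A, x ≤ negA y ↔ x ⊓ y = ⊥)
    (negB : B → B) (hB : ∀ x y : B, x ≤ negB y ↔ x ⊓ y = ⊥)
    (h : A → B) (hsurj : Function.Surjective h)
    (hinf : ∀ x y, h (x ⊓ y) = h x ⊓ h y) (hsup : ∀ x y, h (x ⊔ y) = h x ⊔ h y)
    (hnegh : ∀ x, h (negA x) = negB (h x)) (hbot : h ⊥ = ⊥) (htop : h ⊤ = ⊤)
    (b : B) :
    IsAtom b ↔ b ≠ ⊥ ∧ ∃ a : A, IsAtom a ∧ h a = b :=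
  atom_iff_image_of_atom_general negA hA negB hB h hsurj hinf hnegh hbot b
end

section
/- Let A and B be finite pseudocomplemented distributive lattices, h : A → B a surjective homomorphism, b ∈ B, and let a be the meet of the set h⁻¹[↑b] = {c ∈ A : b ≤ h(c)}. Then h(a) = b; for every c ∈ A with c < a one has h(c) < b; and if b is join-irreducible in B, then a is join-irreducible in A. -/
/-! Since `h` preserves finite meets, the set `{c | b ≤ h c}` is closed under meets, so its meet
`a` is its least element; surjectivity gives `h a = b`. Anything strictly below `a` lies outside
the set, and a splitting `a = c ⊔ d` maps to a splitting `b = h c ⊔ h d`, which puts `c` or `d`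
back in the set, hence above `a`. -/

section LeastAbove

variable {α β : Type*}

noncomputable def leastAbove [SemilatticeInf α] [OrderTop α] [Finite α] [Preorder β]
    (f : α → β) (b : β) : α :=
  (Set.toFinite {c : α | b ≤ f c}).toFinset.inf id

section Inf

variable [SemilatticeInf α] [OrderTop α] [Finite α]

theorem leastAbove_le [Preorder β] {f : α → β} {b : β} {c : α} (hc : b ≤ f c) :
    leastAbove f b ≤ c :=
  Finset.inf_le (by simpa using hc)

theorem not_le_apply_of_lt_leastAbove [Preorder β] {f : α → β} {b : β} {c : α}
    (hc : c < leastAbove f b) : ¬b ≤ f c :=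
  fun hbc => hc.not_ge (leastAbove_le hbc)

variable {F : Type*} [SemilatticeInf β] [OrderTop β] [FunLike F α β] [InfTopHomClass F α β]

theorem le_apply_leastAbove (f : F) (b : β) : b ≤ f (leastAbove f b) := by
  rw [leastAbove, map_finset_inf]
  exact Finset.le_inf fun c hc => by simpa using hc

theorem apply_leastAbove {f : F} {b : β} (hb : b ∈ Set.range f) : f (leastAbove f b) = b := by
  obtain ⟨c, rfl⟩ := hb
  exact le_antisymm (OrderHomClass.mono f (leastAbove_le le_rfl)) (le_apply_leastAbove f _)

theorem apply_lt_of_lt_leastAbove {f : F} {b : β} (hb : b ∈ Set.range f) {c : α}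
    (hc : c < leastAbove f b) : f c < b :=
  lt_of_le_not_ge (apply_leastAbove hb ▸ OrderHomClass.mono f hc.le)
    (not_le_apply_of_lt_leastAbove hc)

end Inf

theorem JoinIrr.leastAbove [Lattice α] [BoundedOrder α] [Finite α] [Lattice β] [BoundedOrder β]
    {f : BoundedLatticeHom α β} {b : β} (hb : b ∈ Set.range f) (hirr : JoinIrr b) :
    JoinIrr (leastAbove f b) := by
  have hfa := apply_leastAbove hb
  refine ⟨fun ha => hirr.1 (by rw [← hfa, ha, map_bot]), fun c d hcd => ?_⟩
  have hbcd : b = f c ⊔ f d := by rw [← hfa, hcd, map_sup]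
  rcases hirr.2 _ _ hbcd with hbc | hbd
  · exact .inl (le_antisymm (leastAbove_le hbc.le) (hcd ▸ le_sup_left))
  · exact .inr (le_antisymm (leastAbove_le hbd.le) (hcd ▸ le_sup_right))

end LeastAbove

theorem meet_preimage_upset_properties_general
    {A B : Type*} [DistribLattice A] [BoundedOrder A] [Finite A]
    [DistribLattice B] [BoundedOrder B]
    (h : A → B) (hsurj : Function.Surjective h)
    (hinf : ∀ x y, h (x ⊓ y) = h x ⊓ h y) (hsup : ∀ x y, h (x ⊔ y) = h x ⊔ h y)
    (hbot : h ⊥ = ⊥) (htop : h ⊤ = ⊤)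
    (b : B) (a : A)
    (ha : a = (Set.toFinite {c : A | b ≤ h c}).toFinset.inf id) :
    h a = b ∧ (∀ c : A, c < a → h c < b) ∧ (JoinIrr b → JoinIrr a) := by
  let f : BoundedLatticeHom A B :=
    { toFun := h, map_sup' := hsup, map_inf' := hinf, map_top' := htop, map_bot' := hbot }
  have hb : b ∈ Set.range f := hsurj b
  have ha : a = leastAbove f b := ha
  subst ha
  exact ⟨apply_leastAbove hb, fun _ => apply_lt_of_lt_leastAbove hb, JoinIrr.leastAbove hb⟩

/-- Let `A` and `B` be finite pseudocomplemented distributive lattices (bounded distributive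
lattices with operations `negA`, `negB` satisfying `x ≤ ¬y ↔ x ⊓ y = ⊥`), `h : A → B` a
surjective homomorphism (preserving `⊓`, `⊔`, `¬`, `⊥`, `⊤`), `b ∈ B`, and let `a` be the
meet of `h⁻¹[↑b] = {c : b ≤ h c}`. Then `h a = b`; `h c < b` whenever `c < a`; and if `b` is
join-irreducible then so is `a`. -/
theorem meet_preimage_upset_properties
    {A B : Type*} [DistribLattice A] [BoundedOrder A] [Finite A]
    [DistribLattice B] [BoundedOrder B] [Finite B]
    (negA : A → A) (hA : ∀ x y : A, x ≤ negA y ↔ x ⊓ y = ⊥)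
    (negB : B → B) (hB : ∀ x y : B, x ≤ negB y ↔ x ⊓ y = ⊥)
    (h : A → B) (hsurj : Function.Surjective h)
    (hinf : ∀ x y, h (x ⊓ y) = h x ⊓ h y) (hsup : ∀ x y, h (x ⊔ y) = h x ⊔ h y)
    (hnegh : ∀ x, h (negA x) = negB (h x)) (hbot : h ⊥ = ⊥) (htop : h ⊤ = ⊤)
    (b : B) (a : A)
    (ha : a = (Set.toFinite {c : A | b ≤ h c}).toFinset.inf id) :
    h a = b ∧ (∀ c : A, c < a → h c < b) ∧ (JoinIrr b → JoinIrr a) :=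
  meet_preimage_upset_properties_general h hsurj hinf hsup hbot htop b a ha
end

section
/- Let A be a pseudocomplemented distributive lattice generated by elements a₁, …, aₙ. Then b ∈ A is an atom of A if and only if b ≠ 0 and there exists T ⊆ {1,…,n} such that b = a_T, where a_T = ⋀_{i∈T} aᵢ ∧ ⋀_{i∉T} ¬aᵢ. -/
/-!
Fix `T`. The elements `x` with `x ⊓ a_T = ⊥` or `a_T ≤ x` include the generators, `⊥` and
`⊤`, and are closed under `⊓`, `⊔`, `¬`; hence they are all of `A`, and a nonzero `a_T` is an
atom. Conversely, an atom `b` is disjoint from every `aᵢ` not above it, i.e. lies below `¬aᵢ`,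
so `b ≤ a_T` for `T = {i | b ≤ aᵢ}`; then `b ⊓ a_T ≠ ⊥`, which forces `a_T ≤ b`.
-/

/-- Given elements `a 0, …, a (n-1)` of a pseudocomplemented distributive lattice with
pseudocomplement operation `neg`, and `T ⊆ {0,…,n-1}`,
`aT neg a T = ⋀_{i ∈ T} a i ⊓ ⋀_{i ∉ T} ¬(a i)` (empty meets being `⊤`). -/
def aT {A : Type*} [Lattice A] [OrderTop A] (neg : A → A) {n : ℕ}
    (a : Fin n → A) (T : Finset (Fin n)) : A :=
  T.inf a ⊓ Tᶜ.inf fun i => neg (a i)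

section DisjointOrLe

variable {A : Type*} {c x y : A}

theorem isAtom_of_forall_disjoint_or_le [PartialOrder A] [OrderBot A] (hc : c ≠ ⊥)
    (h : ∀ x, Disjoint x c ∨ c ≤ x) : IsAtom c :=
  isAtom_iff_le_of_ge.2 ⟨hc, fun x hx hxc =>
    (h x).resolve_left fun hdis => hx (hdis.eq_bot_of_le hxc)⟩

theorem disjoint_or_le_inf [Lattice A] [OrderBot A] (hx : Disjoint x c ∨ c ≤ x)
    (hy : Disjoint y c ∨ c ≤ y) : Disjoint (x ⊓ y) c ∨ c ≤ x ⊓ y := by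
  rcases hx with hx | hx
  · exact .inl (hx.mono_left inf_le_left)
  rcases hy with hy | hy
  · exact .inl (hy.mono_left inf_le_right)
  · exact .inr (le_inf hx hy)

theorem disjoint_or_le_sup [DistribLattice A] [OrderBot A] (hx : Disjoint x c ∨ c ≤ x)
    (hy : Disjoint y c ∨ c ≤ y) : Disjoint (x ⊔ y) c ∨ c ≤ x ⊔ y := by
  rcases hx with hx | hx
  · rcases hy with hy | hy
    · exact .inl (disjoint_sup_left.2 ⟨hx, hy⟩)
    · exact .inr (le_sup_of_le_right hy)
  · exact .inr (le_sup_of_le_left hx)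

theorem disjoint_or_le_neg [Lattice A] [OrderBot A] {neg : A → A}
    (hneg : ∀ x y : A, x ≤ neg y ↔ x ⊓ y = ⊥) (hx : Disjoint x c ∨ c ≤ x) :
    Disjoint (neg x) c ∨ c ≤ neg x := by
  rcases hx with hx | hx
  · exact .inr ((hneg c x).2 hx.symm.eq_bot)
  · exact .inl ((disjoint_iff.2 ((hneg (neg x) x).1 le_rfl)).mono_right hx)

end DisjointOrLe

section PseudocomplementedGenerators

variable {A : Type*} {neg : A → A} {n : ℕ} (a : Fin n → A)

theorem disjoint_or_aT_le_of_generated [DistribLattice A] [BoundedOrder A]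
    (hneg : ∀ x y : A, x ≤ neg y ↔ x ⊓ y = ⊥)
    (hgen : ∀ S : Set A, (∀ i, a i ∈ S) → (⊥ : A) ∈ S → (⊤ : A) ∈ S →
      (∀ x ∈ S, ∀ y ∈ S, x ⊓ y ∈ S) → (∀ x ∈ S, ∀ y ∈ S, x ⊔ y ∈ S) →
      (∀ x ∈ S, neg x ∈ S) → S = Set.univ)
    (T : Finset (Fin n)) (x : A) : Disjoint x (aT neg a T) ∨ aT neg a T ≤ x := by
  have hgenerators : ∀ i, Disjoint (a i) (aT neg a T) ∨ aT neg a T ≤ a i := by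
    intro i
    by_cases hi : i ∈ T
    · exact .inr (inf_le_left.trans (Finset.inf_le hi))
    · have hle : aT neg a T ≤ neg (a i) :=
        inf_le_right.trans (Finset.inf_le (f := fun i => neg (a i)) (Finset.mem_compl.2 hi))
      exact .inl (disjoint_iff.2 ((hneg _ _).1 hle)).symm
  have hS := hgen {x | Disjoint x (aT neg a T) ∨ aT neg a T ≤ x} hgenerators
    (.inl disjoint_bot_left) (.inr le_top) (fun _ hx _ hy => disjoint_or_le_inf hx hy)
    (fun _ hx _ hy => disjoint_or_le_sup hx hy) (fun _ hx => disjoint_or_le_neg hneg hx)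
  exact Set.eq_univ_iff_forall.1 hS x

open Classical in
theorem le_aT_of_isAtom [Lattice A] [BoundedOrder A]
    (hneg : ∀ x y : A, x ≤ neg y ↔ x ⊓ y = ⊥) {b : A} (hb : IsAtom b) :
    b ≤ aT neg a (Finset.univ.filter fun i => b ≤ a i) := by
  refine le_inf (Finset.le_inf fun i hi => (Finset.mem_filter.1 hi).2)
    (Finset.le_inf fun i hi => ?_)
  have hi : ¬b ≤ a i := by simpa using hi
  exact (hneg b (a i)).2 (hb.not_le_iff_disjoint.1 hi).eq_bot

end PseudocomplementedGenerators

/-- Let `A` be a pseudocomplemented distributive lattice (a bounded distributive lattice with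
an operation `neg` satisfying `x ≤ ¬y ↔ x ⊓ y = ⊥`) generated by `a 0, …, a (n-1)` (no proper
subset of `A` contains the generators, `⊥`, `⊤` and is closed under `⊓`, `⊔`, `¬`). Then
`b ∈ A` is an atom iff `b ≠ ⊥` and `b = a_T` for some `T ⊆ {0,…,n-1}`. -/
theorem atom_iff_aT_of_generated
    {A : Type*} [DistribLattice A] [BoundedOrder A]
    (neg : A → A) (hneg : ∀ x y : A, x ≤ neg y ↔ x ⊓ y = ⊥)
    {n : ℕ} (a : Fin n → A)
    (hgen : ∀ S : Set A, (∀ i, a i ∈ S) → (⊥ : A) ∈ S → (⊤ : A) ∈ S →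
      (∀ x ∈ S, ∀ y ∈ S, x ⊓ y ∈ S) → (∀ x ∈ S, ∀ y ∈ S, x ⊔ y ∈ S) →
      (∀ x ∈ S, neg x ∈ S) → S = Set.univ)
    (b : A) :
    IsAtom b ↔ b ≠ ⊥ ∧ ∃ T : Finset (Fin n), b = aT neg a T := by
  have split := disjoint_or_aT_le_of_generated a hneg hgen
  constructor
  · intro hb
    have hle := le_aT_of_isAtom a hneg hb
    exact ⟨hb.1, _, hle.antisymm ((split _ b).resolve_left fun h => hb.1 (h.eq_bot_of_le hle))⟩
  · rintro ⟨hb, T, rfl⟩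
    exact isAtom_of_forall_disjoint_or_le hb (split T)
end
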